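/- arXiv:1209.0800 — 5 statements merged into one kernel-verified Lean document; each statement's English description precedes it below -/
import Mathlib

section
/- For the language L ⊆ (𝔹²)^ω given by the ω-regular expression (0 a / a *)Σ^ω + (1 * * b / b * * *)Σ^ω — i.e., Player O wins iff either α starts with 0 and β_0 = α_1, or α starts with 1 and β_0 = α_3 — there is a 3-delay operator λ (λ(α)_i depends only on α_0⋯α_{i+3}) with {(α, λ(α)) : α ∈ 𝔹^ω} ⊆ L, but there is no 2-delay operator with that property. -/
/-!
Player O's first output must be `α 1` when `α 0 = 0` and `α 3` when `α 0 = 1`. Reading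
`α 0, …, α 3` before answering therefore suffices, whereas an operator with delay two fixes its
first output before seeing `α 3`: it cannot tell `1111…` from `11101…`, which demand different
answers.
-/

/-- `lam` is a `d`-delay operator: `lam α i` depends only on `α 0, …, α (i + d)`. -/
def IsConstDelayOp (d : ℕ) (lam : (ℕ → Bool) → (ℕ → Bool)) : Prop :=
  ∀ α β : ℕ → Bool, ∀ i : ℕ, (∀ j ≤ i + d, α j = β j) → lam α i = lam β i

/-- The language of Example: `(α,β) ∈ L` iff (`α 0 = 0` and `β 0 = α 1`) or
(`α 0 = 1` and `β 0 = α 3`). -/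
def LEx : Set (ℕ → Bool × Bool) :=
  {x | ((x 0).1 = false ∧ (x 0).2 = (x 1).1) ∨ ((x 0).1 = true ∧ (x 0).2 = (x 3).1)}

theorem mem_LEx_iff {α β : ℕ → Bool} :
    (fun i => (α i, β i)) ∈ LEx ↔ β 0 = cond (α 0) (α 3) (α 1) := by
  cases h : α 0 <;> simp [LEx, h]

theorem isConstDelayOp_const {d : ℕ} {g : (ℕ → Bool) → Bool}
    (hg : ∀ α β : ℕ → Bool, (∀ j ≤ d, α j = β j) → g α = g β) :
    IsConstDelayOp d fun α _ => g α :=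
  fun α β _ h => hg α β fun j hj => h j (by omega)

theorem IsConstDelayOp.apply_zero_update {d : ℕ} {lam : (ℕ → Bool) → (ℕ → Bool)}
    (hd : IsConstDelayOp d lam) (α : ℕ → Bool) (b : Bool) :
    lam (Function.update α (d + 1) b) 0 = lam α 0 :=
  hd _ _ 0 fun j hj => Function.update_of_ne (by omega) b α

/-- there is a 3-delay operator solving `LEx`, but no 2-delay
operator does. -/
theorem example_needs_delay_three :
    (∃ lam : (ℕ → Bool) → (ℕ → Bool), IsConstDelayOp 3 lam ∧
      ∀ α : ℕ → Bool, (fun i => (α i, lam α i)) ∈ LEx) ∧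
    ¬ (∃ lam : (ℕ → Bool) → (ℕ → Bool), IsConstDelayOp 2 lam ∧
      ∀ α : ℕ → Bool, (fun i => (α i, lam α i)) ∈ LEx) := by
  constructor
  · refine ⟨fun α _ => cond (α 0) (α 3) (α 1), isConstDelayOp_const ?_, fun α => mem_LEx_iff.2 rfl⟩
    intro α β h
    rw [h 0 (by omega), h 1 (by omega), h 3 le_rfl]
  · rintro ⟨lam, hd, hL⟩
    have hsame := hd.apply_zero_update (fun _ => true) false
    rw [mem_LEx_iff.1 (hL _), mem_LEx_iff.1 (hL _)] at hsame
    simp at hsame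
end

section
/- Acceptance by a deterministic parity automaton is invariant under ∼-equivalence of factors: if (u_i, v_i) ∼ (u_i', v_i') for all i ∈ ℕ (with all pairs nonempty), then the infinite concatenation (u_0,v_0)(u_1,v_1)⋯ is accepted by A iff (u_0',v_0')(u_1',v_1')⋯ is accepted by A. -/
/-- The maximal color occurring on the run of the automaton from `p` on the word `w`
(colors of the states visited after the start), `⊥` for the empty word. -/
def runMax {Q : Type*} (δ : Q → (Bool × Bool) → Q) (c : Q → ℕ) :
    Q → List (Bool × Bool) → WithBot ℕ
  | _, [] => ⊥
  | p, a :: w => max ((c (δ p a) : ℕ) : WithBot ℕ) (runMax δ c (δ p a) w)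

/-- The matrix `μ(u,v) ∈ S^{Q×Q}` of a pair word `w` over `𝔹²`. -/
def mu {Q : Type*} [DecidableEq Q] (δ : Q → (Bool × Bool) → Q) (c : Q → ℕ)
    (w : List (Bool × Bool)) (p q : Q) : WithBot ℕ :=
  if List.foldl δ p w = q then runMax δ c p w else ⊥

/-- Infinite concatenation of a sequence of (nonempty) finite blocks, with a default
letter `d` (irrelevant when all blocks are nonempty). -/
def infConcat {A : Type*} (d : A) (w : ℕ → List A) : ℕ → A :=
  fun n => (((List.range (n + 1)).map w).flatten.getD n d)

/-- The run of a deterministic automaton on an infinite word. -/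
def parityRun {Q : Type*} (δ : Q → (Bool × Bool) → Q) (q0 : Q)
    (x : ℕ → Bool × Bool) : ℕ → Q
  | 0 => q0
  | n + 1 => δ (parityRun δ q0 x n) (x n)

/-- Max-parity acceptance: the maximal color occurring infinitely often in the run
is even. -/
def parityAccepts {Q : Type*} (δ : Q → (Bool × Bool) → Q) (q0 : Q) (c : Q → ℕ)
    (x : ℕ → Bool × Bool) : Prop :=
  ∃ k : ℕ, (∀ N, ∃ n ≥ N, c (parityRun δ q0 x n) = k) ∧ Even k ∧
    ∀ k' : ℕ, (∀ N, ∃ n ≥ N, c (parityRun δ q0 x n) = k') → k' ≤ k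

namespace ParitySim

variable {Q : Type*}

/-- concatenation of the first `N` blocks. -/
def Fcat (w : ℕ → List (Bool × Bool)) (N : ℕ) : List (Bool × Bool) :=
  ((List.range N).map w).flatten

lemma Fcat_succ (w : ℕ → List (Bool × Bool)) (N : ℕ) :
    Fcat w (N + 1) = Fcat w N ++ w N := by
  simp [Fcat, List.range_succ]

lemma Fcat_prefix (w : ℕ → List (Bool × Bool)) {a b : ℕ} (hab : a ≤ b) :
    Fcat w a <+: Fcat w b := by
  induction b with
  | zero => simp_all
  | succ b ih =>
    rcases Nat.lt_or_ge a (b+1) with hb | hb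
    · exact (ih (Nat.lt_succ_iff.mp hb)).trans ⟨w b, (Fcat_succ w b).symm⟩
    · have : a = b + 1 := le_antisymm hab hb
      subst this; exact List.prefix_refl _

lemma le_length_Fcat (w : ℕ → List (Bool × Bool)) (hne : ∀ i, w i ≠ []) (N : ℕ) :
    N ≤ (Fcat w N).length := by
  induction N with
  | zero => simp
  | succ N ih =>
    rw [Fcat_succ, List.length_append]
    have : 1 ≤ (w N).length := List.length_pos_iff.mpr (hne N)
    omega

lemma infConcat_eq_getD (d : Bool × Bool) (w : ℕ → List (Bool × Bool))
    (hne : ∀ i, w i ≠ []) {n N : ℕ} (h : n < (Fcat w N).length) :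
    infConcat d w n = (Fcat w N).getD n d := by
  have h1 : n < (Fcat w (n+1)).length :=
    Nat.lt_of_lt_of_le (Nat.lt_succ_self n) (le_length_Fcat w hne (n+1))
  rcases Nat.le_total (n+1) N with hN | hN
  · obtain ⟨t, ht⟩ := Fcat_prefix w hN
    show (Fcat w (n+1)).getD n d = _
    rw [← ht, List.getD_append _ _ _ _ h1]
  · obtain ⟨t, ht⟩ := Fcat_prefix w hN
    show (Fcat w (n+1)).getD n d = _
    rw [← ht, List.getD_append _ _ _ _ h]

lemma parityRun_eq_foldl (δ : Q → (Bool × Bool) → Q) (q0 : Q)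
    (d : Bool × Bool) (w : ℕ → List (Bool × Bool)) (hne : ∀ i, w i ≠ [])
    {m N : ℕ} (h : m ≤ (Fcat w N).length) :
    parityRun δ q0 (infConcat d w) m = List.foldl δ q0 ((Fcat w N).take m) := by
  induction m with
  | zero => simp [parityRun]
  | succ m ih =>
    have hm : m < (Fcat w N).length := h
    have hx : infConcat d w m = (Fcat w N)[m]'hm := by
      rw [infConcat_eq_getD d w hne hm, List.getD_eq_getElem _ d hm]
    rw [List.take_succ, List.foldl_append, List.getElem?_eq_getElem hm]
    show δ (parityRun δ q0 (infConcat d w) m) (infConcat d w m) = _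
    rw [ih (le_of_lt hm), hx]
    rfl

/-- boundary state before block `n`. -/
def bstate (δ : Q → (Bool × Bool) → Q) (q0 : Q) (w : ℕ → List (Bool × Bool)) (n : ℕ) : Q :=
  List.foldl δ q0 (Fcat w n)

lemma bstate_succ (δ : Q → (Bool × Bool) → Q) (q0 : Q) (w : ℕ → List (Bool × Bool)) (n : ℕ) :
    bstate δ q0 w (n+1) = List.foldl δ (bstate δ q0 w n) (w n) := by
  rw [bstate, Fcat_succ, List.foldl_append]; rfl

/-- colors visited strictly inside a block. -/
def blockColors (δ : Q → (Bool × Bool) → Q) (c : Q → ℕ) (p : Q)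
    (l : List (Bool × Bool)) : List ℕ :=
  (List.range l.length).map (fun j => c (List.foldl δ p (l.take (j+1))))

lemma runMax_eq_maximum (δ : Q → (Bool × Bool) → Q) (c : Q → ℕ) (p : Q)
    (l : List (Bool × Bool)) :
    runMax δ c p l = (blockColors δ c p l).maximum := by
  induction l generalizing p with
  | nil => rfl
  | cons a t ih =>
    rw [runMax, ih (δ p a)]
    have : blockColors δ c p (a :: t) = c (δ p a) :: blockColors δ c (δ p a) t := by
      simp only [blockColors, List.length_cons, List.range_succ_eq_map, List.map_cons,
        List.map_map]
      constructor
    rw [this, List.maximum_cons]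
    rfl

lemma runMax_ne_bot (δ : Q → (Bool × Bool) → Q) (c : Q → ℕ) (p : Q)
    {l : List (Bool × Bool)} (h : l ≠ []) : runMax δ c p l ≠ ⊥ := by
  cases l with
  | nil => exact absurd rfl h
  | cons a t =>
    rw [runMax]
    intro hb
    rw [max_eq_bot] at hb
    exact WithBot.coe_ne_bot hb.1

lemma mu_step [DecidableEq Q] (δ : Q → (Bool × Bool) → Q) (c : Q → ℕ) (p : Q)
    {l l' : List (Bool × Bool)} (hl : l ≠ []) (hmu : mu δ c l = mu δ c l') :
    List.foldl δ p l' = List.foldl δ p l ∧ runMax δ c p l' = runMax δ c p l := by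
  have h1 : mu δ c l p (List.foldl δ p l) = runMax δ c p l := if_pos rfl
  have h2 : mu δ c l' p (List.foldl δ p l) = runMax δ c p l := by
    rw [← hmu]; exact h1
  rw [mu] at h2
  by_cases hq : List.foldl δ p l' = List.foldl δ p l
  · rw [if_pos hq] at h2; exact ⟨hq, h2⟩
  · rw [if_neg hq] at h2; exact absurd h2.symm (runMax_ne_bot δ c p hl)

end ParitySim

namespace ParitySim

variable {Q : Type*}

/-- position of the start of block `n`. -/
def pos (w : ℕ → List (Bool × Bool)) (n : ℕ) : ℕ := (Fcat w n).length

lemma pos_succ (w : ℕ → List (Bool × Bool)) (n : ℕ) :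
    pos w (n+1) = pos w n + (w n).length := by
  simp [pos, Fcat_succ]

lemma pos_mono (w : ℕ → List (Bool × Bool)) {a b : ℕ} (hab : a ≤ b) :
    pos w a ≤ pos w b := (Fcat_prefix w hab).length_le

lemma le_pos (w : ℕ → List (Bool × Bool)) (hne : ∀ i, w i ≠ []) (n : ℕ) :
    n ≤ pos w n := le_length_Fcat w hne n

/-- every position decomposes into a block index and an offset. -/
lemma exists_block (w : ℕ → List (Bool × Bool)) (hne : ∀ i, w i ≠ []) (m : ℕ) :
    ∃ n j, j < (w n).length ∧ m = pos w n + j := by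
  have hex : ∃ n, m < pos w (n+1) :=
    ⟨m, Nat.lt_of_lt_of_le (Nat.lt_succ_self m) (le_pos w hne (m+1))⟩
  classical
  set n := Nat.find hex with hn
  have h1 : m < pos w (n+1) := Nat.find_spec hex
  have h2 : pos w n ≤ m := by
    cases hn' : n with
    | zero => simp [pos, Fcat]
    | succ k =>
      have := Nat.find_min hex (m := k) (by omega)
      rw [← hn'] at *
      omega
  refine ⟨n, m - pos w n, ?_, by omega⟩
  rw [pos_succ] at h1
  omega

/-- the run state just after step `j+1` of block `n`. -/
lemma run_in_block (δ : Q → (Bool × Bool) → Q) (q0 : Q) (d : Bool × Bool)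
    (w : ℕ → List (Bool × Bool)) (hne : ∀ i, w i ≠ []) {n j : ℕ}
    (hj : j < (w n).length) :
    parityRun δ q0 (infConcat d w) (pos w n + j + 1) =
      List.foldl δ (bstate δ q0 w n) ((w n).take (j+1)) := by
  have hle : pos w n + j + 1 ≤ (Fcat w (n+1)).length := by
    rw [← pos, pos_succ]; omega
  rw [parityRun_eq_foldl δ q0 d w hne hle, Fcat_succ,
    List.take_append]
  have h1 : (Fcat w n).take (pos w n + j + 1) = Fcat w n :=
    List.take_of_length_le (by simp only [pos]; omega)
  have h2 : pos w n + j + 1 - (Fcat w n).length = j + 1 := by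
    simp only [pos]; omega
  rw [h1, h2, List.foldl_append]
  rfl

/-- the block max for the `n`-th block. -/
def bmax (δ : Q → (Bool × Bool) → Q) (q0 : Q) (c : Q → ℕ)
    (w : ℕ → List (Bool × Bool)) (n : ℕ) : WithBot ℕ :=
  runMax δ c (bstate δ q0 w n) (w n)

/-- H1 : if a value is the block max infinitely often, it occurs as a run color
infinitely often. -/
lemma H1 (δ : Q → (Bool × Bool) → Q) (q0 : Q) (c : Q → ℕ) (d : Bool × Bool)
    (w : ℕ → List (Bool × Bool)) (hne : ∀ i, w i ≠ []) (M : ℕ)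
    (hM : ∀ N, ∃ n ≥ N, bmax δ q0 c w n = (M : WithBot ℕ)) :
    ∀ N, ∃ m ≥ N, c (parityRun δ q0 (infConcat d w) m) = M := by
  intro N
  obtain ⟨n, hnN, hn⟩ := hM N
  rw [bmax, runMax_eq_maximum] at hn
  have hmem : M ∈ blockColors δ c (bstate δ q0 w n) (w n) := List.maximum_mem hn
  rw [blockColors, List.mem_map] at hmem
  obtain ⟨j, hj, hjM⟩ := hmem
  rw [List.mem_range] at hj
  refine ⟨pos w n + j + 1, ?_, ?_⟩
  · have := le_pos w hne n
    omega
  · rw [run_in_block δ q0 d w hne hj]; exact hjM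

/-- H2 : if a value occurs as a run color infinitely often, then infinitely many
blocks have block max at least that value. -/
lemma H2 (δ : Q → (Bool × Bool) → Q) (q0 : Q) (c : Q → ℕ) (d : Bool × Bool)
    (w : ℕ → List (Bool × Bool)) (hne : ∀ i, w i ≠ []) (k : ℕ)
    (hk : ∀ N, ∃ m ≥ N, c (parityRun δ q0 (infConcat d w) m) = k) :
    ∀ N, ∃ n ≥ N, (k : WithBot ℕ) ≤ bmax δ q0 c w n := by
  intro N
  obtain ⟨m, hmN, hm⟩ := hk (pos w N + 1)
  obtain ⟨n, j, hj, hdec⟩ := exists_block w hne (m - 1)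
  have hm1 : m = pos w n + j + 1 := by omega
  have hnN : N ≤ n := by
    by_contra hc
    push_neg at hc
    have : pos w (n+1) ≤ pos w N := pos_mono w (by omega)
    rw [pos_succ] at this
    omega
  refine ⟨n, hnN, ?_⟩
  rw [hm1, run_in_block δ q0 d w hne hj] at hm
  rw [bmax, runMax_eq_maximum, ← hm]
  apply List.le_maximum_of_mem'
  rw [blockColors, List.mem_map]
  exact ⟨j, List.mem_range.mpr hj, rfl⟩

/-- pigeonhole: bounded values hit some fixed value infinitely often. -/
lemma pigeon (B : ℕ → WithBot ℕ) (C : ℕ) (hb : ∀ n, B n ≤ (C : WithBot ℕ)) (k : ℕ)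
    (hk : ∀ N, ∃ n ≥ N, (k : WithBot ℕ) ≤ B n) :
    ∃ M, k ≤ M ∧ ∀ N, ∃ n ≥ N, B n = (M : WithBot ℕ) := by
  by_contra hc
  push_neg at hc
  have hch : ∀ M : ℕ, ∃ N, k ≤ M → ∀ n ≥ N, B n ≠ (M : WithBot ℕ) := by
    intro M
    by_cases hM : k ≤ M
    · obtain ⟨N, hN⟩ := hc M hM
      exact ⟨N, fun _ => hN⟩
    · exact ⟨0, fun h => absurd h hM⟩
  choose Nf hNf using hch
  set NN := (Finset.range (C+1)).sup Nf with hNN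
  obtain ⟨n, hn1, hn2⟩ := hk NN
  cases hB : B n with
  | bot => rw [hB] at hn2; exact absurd hn2 (by simp)
  | coe v =>
    rw [hB] at hn2
    have hkv : k ≤ v := WithBot.coe_le_coe.mp hn2
    have hvC : v ≤ C := WithBot.coe_le_coe.mp (hB ▸ hb n)
    have hle : Nf v ≤ NN := Finset.le_sup (Finset.mem_range.mpr (by omega))
    exact hNf v hkv n (le_trans hle hn1) hB

/-- bound on block maxima. -/
lemma bmax_le [Fintype Q] (δ : Q → (Bool × Bool) → Q) (q0 : Q) (c : Q → ℕ)
    (w : ℕ → List (Bool × Bool)) (n : ℕ) :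
    bmax δ q0 c w n ≤ ((Finset.univ.sup c : ℕ) : WithBot ℕ) := by
  rw [bmax]
  generalize bstate δ q0 w n = p
  induction (w n) generalizing p with
  | nil => exact bot_le
  | cons a t ih =>
    rw [runMax]
    exact max_le (WithBot.coe_le_coe.mpr (Finset.le_sup (f := c) (Finset.mem_univ _))) (ih _)

/-- main characterization: acceptance only depends on the sequence of block maxima. -/
lemma accepts_iff_blocks [Fintype Q] (δ : Q → (Bool × Bool) → Q) (q0 : Q) (c : Q → ℕ)
    (d : Bool × Bool) (w : ℕ → List (Bool × Bool)) (hne : ∀ i, w i ≠ []) :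
    parityAccepts δ q0 c (infConcat d w) ↔
      ∃ M : ℕ, (∀ N, ∃ n ≥ N, bmax δ q0 c w n = (M : WithBot ℕ)) ∧ Even M ∧
        ∀ M' : ℕ, (∀ N, ∃ n ≥ N, bmax δ q0 c w n = (M' : WithBot ℕ)) → M' ≤ M := by
  constructor
  · rintro ⟨k, hk, hke, hkmax⟩
    obtain ⟨M, hkM, hM⟩ := pigeon (bmax δ q0 c w) (Finset.univ.sup c)
      (bmax_le δ q0 c w) k (H2 δ q0 c d w hne k hk)
    have hMrun := H1 δ q0 c d w hne M hM
    have hMk : M ≤ k := hkmax M hMrun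
    have hMek : M = k := le_antisymm hMk hkM
    refine ⟨M, hM, hMek ▸ hke, ?_⟩
    intro M' hM'
    have := hkmax M' (H1 δ q0 c d w hne M' hM')
    omega
  · rintro ⟨M, hM, hMe, hMmax⟩
    refine ⟨M, H1 δ q0 c d w hne M hM, hMe, ?_⟩
    intro k' hk'
    obtain ⟨M', hk'M', hM'⟩ := pigeon (bmax δ q0 c w) (Finset.univ.sup c)
      (bmax_le δ q0 c w) k' (H2 δ q0 c d w hne k' hk')
    exact le_trans hk'M' (hMmax M' hM')

end ParitySim

namespace ParitySim

lemma bstate_bmax_eq {Q : Type*} [DecidableEq Q] (δ : Q → (Bool × Bool) → Q)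
    (q0 : Q) (c : Q → ℕ) (w w' : ℕ → List (Bool × Bool))
    (h : ∀ i, w i ≠ [] ∧ w' i ≠ [] ∧ mu δ c (w i) = mu δ c (w' i)) (n : ℕ) :
    bstate δ q0 w n = bstate δ q0 w' n ∧ bmax δ q0 c w n = bmax δ q0 c w' n := by
  induction n with
  | zero =>
    have h0 : bstate δ q0 w 0 = q0 := rfl
    have h0' : bstate δ q0 w' 0 = q0 := rfl
    obtain ⟨hfold, hrm⟩ := mu_step δ c q0 (h 0).1 (h 0).2.2
    exact ⟨h0.trans h0'.symm, by rw [bmax, bmax, h0, h0', hrm]⟩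
  | succ n ih =>
    obtain ⟨hs, hb⟩ := ih
    obtain ⟨hfold, hrm⟩ := mu_step δ c (bstate δ q0 w n) (h (n+1)).1 (h (n+1)).2.2
    obtain ⟨hfold0, hrm0⟩ := mu_step δ c (bstate δ q0 w n) (h n).1 (h n).2.2
    have hstep : bstate δ q0 w (n+1) = bstate δ q0 w' (n+1) := by
      rw [bstate_succ, bstate_succ, ← hs, hfold0]
    obtain ⟨hfold1, hrm1⟩ := mu_step δ c (bstate δ q0 w (n+1)) (h (n+1)).1 (h (n+1)).2.2
    exact ⟨hstep, by rw [bmax, bmax, ← hstep, hrm1]⟩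

end ParitySim


/-- acceptance by a deterministic parity automaton is invariant under
`∼`-equivalence of the (nonempty) factors of an infinite concatenation. -/
theorem parity_acceptance_invariant_under_sim
    {Q : Type*} [Fintype Q] [DecidableEq Q]
    (δ : Q → (Bool × Bool) → Q) (q0 : Q) (c : Q → ℕ)
    (w w' : ℕ → List (Bool × Bool))
    (h : ∀ i, w i ≠ [] ∧ w' i ≠ [] ∧ mu δ c (w i) = mu δ c (w' i)) :
    parityAccepts δ q0 c (infConcat (false, false) w) ↔
      parityAccepts δ q0 c (infConcat (false, false) w') := by
  have hne : ∀ i, w i ≠ [] := fun i => (h i).1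
  have hne' : ∀ i, w' i ≠ [] := fun i => (h i).2.1
  have hb : ∀ n, ParitySim.bmax δ q0 c w n = ParitySim.bmax δ q0 c w' n :=
    fun n => (ParitySim.bstate_bmax_eq δ q0 c w w' h n).2
  rw [ParitySim.accepts_iff_blocks δ q0 c (false, false) w hne,
    ParitySim.accepts_iff_blocks δ q0 c (false, false) w' hne']
  simp only [hb]
end

section
/- Undecidability via universality: For a context-free ω-language L_I ⊆ 𝔹^ω, set L = {(α,β) : α ∈ L_I, β ∈ 𝔹^ω} ⊆ (𝔹²)^ω. Then L_I = 𝔹^ω if and only if there exists a delay function f : ℕ → ℕ₊ such that Player O wins the delay game Γ_f(L). (Hence solvability with finite delay for context-free winning conditions reduces from ω-context-free universality, which is undecidable.) -/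
/-- `Ssum f i = f 0 + ⋯ + f (i-1)`. -/
def Ssum (f : ℕ → ℕ) (i : ℕ) : ℕ := ∑ k ∈ Finset.range i, f k

/-- Player O has a winning strategy in the delay game `Γ_f(L)`: functions choosing
the bit `b i` from the first `f 0 + ⋯ + f i` bits of `α` so that every resulting
play lies in `L`. -/
def OWinsDelay (L : Set (ℕ → Bool × Bool)) (f : ℕ → ℕ) : Prop :=
  ∃ σ : ℕ → (ℕ → Bool) → Bool,
    (∀ i : ℕ, ∀ α β : ℕ → Bool, (∀ j < Ssum f (i + 1), α j = β j) → σ i α = σ i β) ∧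
    ∀ α : ℕ → Bool, (fun i => (α i, σ i α)) ∈ L

theorem oWinsDelay_of_forall_const_mem {L : Set (ℕ → Bool × Bool)} (b : Bool)
    (hL : ∀ α : ℕ → Bool, (fun i => (α i, b)) ∈ L) (f : ℕ → ℕ) : OWinsDelay L f :=
  ⟨fun _ _ => b, fun _ _ _ _ => rfl, hL⟩

theorem OWinsDelay.exists_mem {L : Set (ℕ → Bool × Bool)} {f : ℕ → ℕ}
    (h : OWinsDelay L f) (α : ℕ → Bool) : ∃ β : ℕ → Bool, (fun i => (α i, β i)) ∈ L :=
  let ⟨σ, _, hwin⟩ := h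
  ⟨fun i => σ i α, hwin α⟩

/-- for `L = {(α,β) : α ∈ L_I}`, the language `L_I` is universal iff
there is a delay function `f : ℕ → ℕ₊` such that Player O wins `Γ_f(L)`. -/
theorem universal_iff_solvable_with_delay (LI : Set (ℕ → Bool)) :
    LI = Set.univ ↔
      ∃ f : ℕ → ℕ, (∀ i, 1 ≤ f i) ∧
        OWinsDelay {x : ℕ → Bool × Bool | (fun i => (x i).1) ∈ LI} f := by
  constructor
  · rintro rfl
    exact ⟨fun _ => 1, fun _ => le_rfl,
      oWinsDelay_of_forall_const_mem false (fun _ => Set.mem_univ _) _⟩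
  · rintro ⟨f, -, hwin⟩
    refine Set.eq_univ_of_forall fun α => ?_
    obtain ⟨β, hβ⟩ := hwin.exists_mem α
    exact hβ
end

section
/- There is a language L ⊆ (𝔹²)^ω (recognizable by a deterministic ω-pushdown automaton) that is solvable with the delay function f ≡ 2 but not solvable with constant delay: Player O wins the delay game Γ_f(L) where f(i) = 2 for all i, yet for every d ∈ ℕ Player O does not win Γ_{const_d}(L). Concretely, L consists of all pairs (α, β) such that either α is not of the form 1^{2m_0}0^{n_0}1^{2m_1}0^{n_1}⋯ (with all m_i, n_i ≥ 1), or α = 1^{2m_0}0^{n_0}1^{2m_1}0^{n_1}⋯ and β = 1^{m_0}0^{m_0+n_0}1^{m_1}0^{m_1+n_1}⋯. -/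
/-!
With lookahead `2 (j + 1)` Player O knows where the current `α`-block `1^{2m} 0^n` starts, say
at `s`, and for `j = s + t` we have `β j = 1 ↔ t < m ↔ α = 1` on `[s + t, s + 2t + 1]`, bits that
are already visible. With constant delay `d`, the inputs `1^{2d+2} 0 ⋯` and `1^{2d+4} 0 ⋯`
agree on the `2d + 2` bits O has seen when committing to bit `d + 1`, which has to be `0` for
the first and `1` for the second.
-/

/-- Infinite concatenation of a sequence of (nonempty) finite blocks of bits. -/
def flatSeq (w : ℕ → List Bool) : ℕ → Bool :=
  fun n => (((List.range (n + 1)).map w).flatten.getD n false)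

/-- The sequence `1^{2 m 0} 0^{n 0} 1^{2 m 1} 0^{n 1} ⋯`. -/
def alphaOf (m n : ℕ → ℕ) : ℕ → Bool :=
  flatSeq fun i => List.replicate (2 * m i) true ++ List.replicate (n i) false

/-- The sequence `1^{m 0} 0^{m 0 + n 0} 1^{m 1} 0^{m 1 + n 1} ⋯`. -/
def betaOf (m n : ℕ → ℕ) : ℕ → Bool :=
  flatSeq fun i => List.replicate (m i) true ++ List.replicate (m i + n i) false

/-- The half-length-blocks winning condition: `(α,β) ∈ L` iff `α` is not of the form
`1^{2m_0}0^{n_0}1^{2m_1}0^{n_1}⋯` (all `m_i, n_i ≥ 1`), or `α` has this form and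
`β = 1^{m_0}0^{m_0+n_0}1^{m_1}0^{m_1+n_1}⋯`. -/
def Lhalf : Set (ℕ → Bool × Bool) :=
  {x | (¬ ∃ m n : ℕ → ℕ, (∀ i, 1 ≤ m i ∧ 1 ≤ n i) ∧
          (fun k => (x k).1) = alphaOf m n) ∨
       (∃ m n : ℕ → ℕ, (∀ i, 1 ≤ m i ∧ 1 ≤ n i) ∧
          (fun k => (x k).1) = alphaOf m n ∧ (fun k => (x k).2) = betaOf m n)}

/-- The constant-delay function: `const_d 0 = d + 1` and `const_d i = 1` for `i > 0`. -/
def constd (d : ℕ) : ℕ → ℕ := fun i => if i = 0 then d + 1 else 1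

open Finset

theorem length_flatten_map_range {α : Type*} (w : ℕ → List α) (i : ℕ) :
    ((List.range i).map w).flatten.length = ∑ k ∈ range i, (w k).length := by
  induction i with
  | zero => simp
  | succ i ih => simp [List.range_succ, sum_range_succ, ih]

theorem flatSeq_apply {w : ℕ → List Bool} (hw : ∀ k, 0 < (w k).length) {i t : ℕ}
    (ht : t < (w i).length) :
    flatSeq w (∑ k ∈ range i, (w k).length + t) = (w i).getD t false := by
  set N := ∑ k ∈ range i, (w k).length + t
  have hiN : i ≤ N :=
    calc i = ∑ _k ∈ range i, 1 := by simp
      _ ≤ N := (sum_le_sum fun k _ => hw k).trans (Nat.le_add_right _ _)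
  have hsplit : List.range (N + 1) =
      List.range i ++ [i] ++ (List.range (N - i)).map (fun x => i + 1 + x) := by
    rw [← List.range_succ, ← List.range_add]
    congr 1
    omega
  simp only [flatSeq, hsplit, List.map_append, List.flatten_append, List.map_singleton,
    List.flatten_singleton]
  rw [List.getD_append _ _ _ _ (by rw [List.length_append, length_flatten_map_range]; omega),
    List.getD_append_right _ _ _ _ (by rw [length_flatten_map_range]; omega),
    length_flatten_map_range, Nat.add_sub_cancel_left]

theorem getD_replicate_append_replicate (a b t : ℕ) :
    (List.replicate a true ++ List.replicate b false).getD t false = decide (t < a) := by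
  simp only [List.getD_eq_getElem?_getD, List.getElem?_append, List.length_replicate,
    List.getElem?_replicate]
  split_ifs <;> simp_all

theorem flatSeq_runs_apply {a b : ℕ → ℕ} (hab : ∀ k, 0 < a k + b k) {i t : ℕ}
    (ht : t < a i + b i) :
    flatSeq (fun k => List.replicate (a k) true ++ List.replicate (b k) false)
      (∑ k ∈ range i, (a k + b k) + t) = decide (t < a i) := by
  have h := flatSeq_apply (w := fun k => List.replicate (a k) true ++ List.replicate (b k) false)
    (by simpa using hab) (i := i) (t := t) (by simpa using ht)
  simp only [List.length_append, List.length_replicate, getD_replicate_append_replicate] at h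
  exact h

theorem exists_eq_sum_range_add {ℓ : ℕ → ℕ} (hℓ : ∀ i, 0 < ℓ i) (j : ℕ) :
    ∃ i t, t < ℓ i ∧ j = ∑ k ∈ range i, ℓ k + t := by
  induction j with
  | zero => exact ⟨0, 0, hℓ 0, by simp⟩
  | succ j ih =>
    obtain ⟨i, t, ht, rfl⟩ := ih
    by_cases h : t + 1 < ℓ i
    · exact ⟨i, t + 1, h, by omega⟩
    · exact ⟨i + 1, 0, hℓ (i + 1), by rw [sum_range_succ]; omega⟩

section Blocks

variable {m n : ℕ → ℕ}

/-- `alphaOf m n` and `betaOf m n` share these block boundaries, as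
`m i + (m i + n i) = 2 * m i + n i`. -/
def blockPos (m n : ℕ → ℕ) (i : ℕ) : ℕ := ∑ k ∈ range i, (2 * m k + n k)

theorem blockPos_zero : blockPos m n 0 = 0 := rfl

theorem blockPos_succ (i : ℕ) : blockPos m n (i + 1) = blockPos m n i + (2 * m i + n i) :=
  sum_range_succ _ _

variable (hmn : ∀ i, 1 ≤ m i ∧ 1 ≤ n i)
include hmn

theorem alphaOf_apply {i t : ℕ} (ht : t < 2 * m i + n i) :
    alphaOf m n (blockPos m n i + t) = decide (t < 2 * m i) :=
  flatSeq_runs_apply (a := fun k => 2 * m k) (fun k => by have := hmn k; omega) ht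

theorem betaOf_apply {i t : ℕ} (ht : t < 2 * m i + n i) :
    betaOf m n (blockPos m n i + t) = decide (t < m i) := by
  have hpos : blockPos m n i = ∑ k ∈ range i, (m k + (m k + n k)) :=
    sum_congr rfl fun k _ => by omega
  rw [hpos]
  exact flatSeq_runs_apply (fun k => by have := hmn k; omega) (by omega)

theorem alphaOf_apply_of_le {k : ℕ} (hk : k ≤ 2 * m 0) :
    alphaOf m n k = decide (k < 2 * m 0) := by
  simpa [blockPos_zero] using alphaOf_apply hmn (i := 0) (t := k) (by have := hmn 0; omega)

theorem betaOf_apply_of_le {k : ℕ} (hk : k ≤ 2 * m 0) :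
    betaOf m n k = decide (k < m 0) := by
  simpa [blockPos_zero] using betaOf_apply hmn (i := 0) (t := k) (by have := hmn 0; omega)

theorem exists_eq_blockPos_add (j : ℕ) : ∃ i t, t < 2 * m i + n i ∧ j = blockPos m n i + t :=
  exists_eq_sum_range_add (fun i => by have := hmn i; omega) j

end Blocks

theorem le_of_alphaOf_eq {m n m' n' : ℕ → ℕ} (hmn : ∀ i, 1 ≤ m i ∧ 1 ≤ n i)
    (hmn' : ∀ i, 1 ≤ m' i ∧ 1 ≤ n' i) (h : alphaOf m n = alphaOf m' n') : m 0 ≤ m' 0 := by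
  by_contra! hlt
  have key := congrFun h (2 * m' 0)
  rw [alphaOf_apply_of_le hmn (by omega), alphaOf_apply_of_le hmn' le_rfl] at key
  simp only [decide_eq_decide] at key
  omega

theorem snd_eq_of_mem_Lhalf {m n : ℕ → ℕ} (hmn : ∀ i, 1 ≤ m i ∧ 1 ≤ n i) {β : ℕ → Bool}
    (hL : (fun k => (alphaOf m n k, β k)) ∈ Lhalf) {j : ℕ} (hj : j ≤ 2 * m 0) :
    β j = decide (j < m 0) := by
  rcases hL with hL | ⟨m', n', hmn', hα, hβ⟩
  · exact absurd ⟨m, n, hmn, rfl⟩ hL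
  have hm : m' 0 = m 0 :=
    (le_of_alphaOf_eq hmn' hmn hα.symm).antisymm (le_of_alphaOf_eq hmn hmn' hα)
  have hβj : β j = betaOf m' n' j := congrFun hβ j
  rw [hβj, betaOf_apply_of_le hmn' (by omega), hm]

theorem mem_Lhalf_of_forall {α β : ℕ → Bool}
    (h : ∀ m n : ℕ → ℕ, (∀ i, 1 ≤ m i ∧ 1 ≤ n i) → α = alphaOf m n → β = betaOf m n) :
    (fun k => (α k, β k)) ∈ Lhalf := by
  by_cases hα : ∃ m n : ℕ → ℕ, (∀ i, 1 ≤ m i ∧ 1 ≤ n i) ∧ α = alphaOf m n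
  · obtain ⟨m, n, hmn, rfl⟩ := hα
    exact Or.inr ⟨m, n, hmn, rfl, h m n hmn rfl⟩
  · exact Or.inl hα

def lastRise (α : ℕ → Bool) : ℕ → ℕ
  | 0 => 0
  | j + 1 => if α (j + 1) = true ∧ α j = false then j + 1 else lastRise α j

theorem lastRise_le (α : ℕ → Bool) (j : ℕ) : lastRise α j ≤ j := by
  induction j with
  | zero => rfl
  | succ j ih =>
    simp only [lastRise]
    split <;> omega

theorem lastRise_congr {α β : ℕ → Bool} {j : ℕ} (h : ∀ k ≤ j, α k = β k) :
    lastRise α j = lastRise β j := by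
  induction j with
  | zero => rfl
  | succ j ih =>
    simp only [lastRise, h (j + 1) le_rfl, h j (Nat.le_succ j), ih fun k hk => h k (by omega)]

theorem lastRise_eq {α : ℕ → Bool} {s j : ℕ} (hsj : s ≤ j)
    (hs : s = 0 ∨ α s = true ∧ α (s - 1) = false)
    (hrise : ∀ k, s ≤ k → k < j → ¬(α (k + 1) = true ∧ α k = false)) :
    lastRise α j = s := by
  induction j with
  | zero => exact (Nat.le_zero.mp hsj).symm
  | succ j ih =>
    rcases hsj.lt_or_eq with hlt | rfl
    · rw [lastRise, if_neg (hrise j (by omega) (Nat.lt_succ_self j))]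
      exact ih (by omega) fun k hk hkj => hrise k hk (by omega)
    · rcases hs with hs | hs
      · omega
      · exact if_pos hs

theorem lastRise_alphaOf {m n : ℕ → ℕ} (hmn : ∀ i, 1 ≤ m i ∧ 1 ≤ n i) {i t : ℕ}
    (ht : t < 2 * m i + n i) :
    lastRise (alphaOf m n) (blockPos m n i + t) = blockPos m n i := by
  refine lastRise_eq (by omega) ?_ ?_
  · rcases i with _ | i
    · exact Or.inl blockPos_zero
    · have hlast : blockPos m n (i + 1) - 1 = blockPos m n i + (2 * m i + n i - 1) := by
        rw [blockPos_succ]; have := hmn i; omega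
      have := hmn i
      have := hmn (i + 1)
      refine Or.inr ⟨?_, ?_⟩
      · have h := alphaOf_apply hmn (i := i + 1) (t := 0) (by omega)
        simp only [add_zero] at h
        simp only [h, decide_eq_true_eq]
        omega
      · rw [hlast, alphaOf_apply hmn (by omega)]
        simp only [decide_eq_false_iff_not]
        omega
  · intro k hk hkj
    obtain ⟨u, rfl⟩ := Nat.exists_eq_add_of_le hk
    rw [add_assoc, alphaOf_apply hmn (by omega), alphaOf_apply hmn (by omega)]
    simp only [decide_eq_true_eq, decide_eq_false_iff_not]
    omega

def halfStrategy (j : ℕ) (α : ℕ → Bool) : Bool :=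
  decide (∀ k ≤ j - lastRise α j + 1, α (j + k) = true)

theorem halfStrategy_congr {α β : ℕ → Bool} {j : ℕ} (h : ∀ k < 2 * (j + 1), α k = β k) :
    halfStrategy j α = halfStrategy j β := by
  have hle := lastRise_le β j
  rw [halfStrategy, halfStrategy, lastRise_congr fun k hk => h k (by omega), decide_eq_decide]
  exact forall₂_congr fun k hk => by rw [h (j + k) (by omega)]

theorem halfStrategy_alphaOf {m n : ℕ → ℕ} (hmn : ∀ i, 1 ≤ m i ∧ 1 ≤ n i) (j : ℕ) :
    halfStrategy j (alphaOf m n) = betaOf m n j := by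
  obtain ⟨i, t, ht, rfl⟩ := exists_eq_blockPos_add hmn j
  have := hmn i
  rw [halfStrategy, lastRise_alphaOf hmn ht, Nat.add_sub_cancel_left, betaOf_apply hmn ht,
    decide_eq_decide]
  constructor
  · intro hall
    by_contra! hmt
    by_cases h2 : t < 2 * m i
    · have hk := hall (2 * m i - t) (by omega)
      rw [add_assoc, alphaOf_apply hmn (by omega)] at hk
      simp only [decide_eq_true_eq] at hk
      omega
    · have hk := hall 0 (by omega)
      rw [add_zero, alphaOf_apply hmn ht] at hk
      simp only [decide_eq_true_eq] at hk
      omega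
  · intro hmt k hk
    rw [add_assoc, alphaOf_apply hmn (by omega)]
    simp only [decide_eq_true_eq]
    omega

theorem Ssum_const (c i : ℕ) : Ssum (fun _ => c) i = c * i := by
  simp [Ssum, mul_comm]

theorem Ssum_constd_succ (d i : ℕ) : Ssum (constd d) (i + 1) = d + 1 + i := by
  simp [Ssum, sum_range_succ', constd, add_comm]

/-- the (deterministic ω-context-free) language `Lhalf` is solvable
with the delay function `f ≡ 2`, but not solvable with constant delay: for every
`d ∈ ℕ`, Player O does not win `Γ_{const_d}(Lhalf)`. -/
theorem Lhalf_finite_delay_not_constant_delay :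
    OWinsDelay Lhalf (fun _ => 2) ∧ ∀ d : ℕ, ¬ OWinsDelay Lhalf (constd d) := by
  refine ⟨⟨halfStrategy, fun i α β h => halfStrategy_congr fun k hk => h k ?_, fun α => ?_⟩, ?_⟩
  · rwa [Ssum_const]
  · exact mem_Lhalf_of_forall fun m n hmn hα => hα ▸ funext (halfStrategy_alphaOf hmn)
  rintro d ⟨σ, hσ, hwin⟩
  let α (c : ℕ) : ℕ → Bool := alphaOf (fun _ => c + 1) (fun _ => 1)
  have hmn (c : ℕ) : ∀ _ : ℕ, 1 ≤ c + 1 ∧ 1 ≤ 1 := fun _ => ⟨by omega, le_rfl⟩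
  have hshort := snd_eq_of_mem_Lhalf (hmn d) (hwin (α d)) (j := d + 1) (by omega)
  have hlong := snd_eq_of_mem_Lhalf (hmn (d + 1)) (hwin (α (d + 1))) (j := d + 1) (by omega)
  have hagree := hσ (d + 1) (α d) (α (d + 1)) fun k hk => by
    rw [Ssum_constd_succ] at hk
    simp only [α]
    rw [alphaOf_apply_of_le (hmn d) (by omega), alphaOf_apply_of_le (hmn (d + 1)) (by omega)]
    simp only [decide_eq_decide]
    omega
  simp [hshort, hlong] at hagree
end

section
/- In the winning-condition language of Example 'half-length blocks' (L as above), Player I wins Γ_{const_d}(L) for every d ∈ ℕ: after playing 1^{d+2} (forcing Player O to answer with d+1 ones followed by some bit b), Player I plays the bit 1−b and thereby falsifies the condition, so no constant-delay strategy of Player O exists. -/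
/-
Every `α` of the form `1^{2m_0}0^{n_0}⋯` determines `m_0`, and then `L` forces the output bit at
position `m_0` to be `0` and all earlier ones to be `1`. With `M = d + 1`, the inputs
`(1^{2M}0)^ω` and `(1^{2M+2}0)^ω` agree below position `2M = M + d + 1`, so a `d`-delay operator
gives both the same bit at position `M`; but `L` requires `0` for the first and `1` for the second.
-/

lemma flatSeq_of_lt_length_zero (w : ℕ → List Bool) {j : ℕ} (hj : j < (w 0).length) :
    flatSeq w j = (w 0).getD j false := by
  rw [flatSeq, List.range_succ_eq_map, List.map_cons, List.flatten_cons,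
    List.getD_append _ _ _ _ hj]

lemma List.getD_replicate_append_replicate {α : Type*} (a b : ℕ) (x y z : α) {j : ℕ}
    (hj : j < a + b) :
    (replicate a x ++ replicate b y).getD j z = if j < a then x else y := by
  split_ifs with h
  · rw [getD_append _ _ _ _ (by simpa using h), getD_replicate _ h]
  · rw [getD_append_right _ _ _ _ (by simpa using h), length_replicate,
      getD_replicate _ (by omega)]

lemma alphaOf_eq_decide (m n : ℕ → ℕ) (hn : 1 ≤ n 0) {j : ℕ} (hj : j ≤ 2 * m 0) :
    alphaOf m n j = decide (j < 2 * m 0) := by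
  rw [alphaOf, flatSeq_of_lt_length_zero _ (by simp; omega),
    List.getD_replicate_append_replicate _ _ _ _ _ (by omega)]
  simp

lemma betaOf_eq_decide (m n : ℕ → ℕ) (hn : 1 ≤ n 0) {j : ℕ} (hj : j ≤ 2 * m 0) :
    betaOf m n j = decide (j < m 0) := by
  rw [betaOf, flatSeq_of_lt_length_zero _ (by simp; omega),
    List.getD_replicate_append_replicate _ _ _ _ _ (by omega)]
  simp

lemma head_eq_of_alphaOf_eq {m n m' n' : ℕ → ℕ} (hn : 1 ≤ n 0) (hn' : 1 ≤ n' 0)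
    (h : alphaOf m n = alphaOf m' n') : m 0 = m' 0 := by
  have hj := congrFun h (2 * min (m 0) (m' 0))
  rw [alphaOf_eq_decide m n hn (by omega), alphaOf_eq_decide m' n' hn' (by omega)] at hj
  simp only [decide_eq_decide] at hj
  omega

lemma snd_eq_decide_of_mem_Lhalf {x : ℕ → Bool × Bool} (hx : x ∈ Lhalf) {m n : ℕ → ℕ}
    (hmn : ∀ i, 1 ≤ m i ∧ 1 ≤ n i) (hα : (fun k => (x k).1) = alphaOf m n) {j : ℕ}
    (hj : j ≤ 2 * m 0) : (x j).2 = decide (j < m 0) := by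
  rcases hx with hx | ⟨m', n', hmn', hα', hβ'⟩
  · exact absurd ⟨m, n, hmn, hα⟩ hx
  · have hm : m 0 = m' 0 := head_eq_of_alphaOf_eq (hmn 0).2 (hmn' 0).2 (hα.symm.trans hα')
    rw [hm] at hj ⊢
    exact (congrFun hβ' j).trans (betaOf_eq_decide m' n' (hmn' 0).2 hj)

/-- Player I wins `Γ_{const_d}(Lhalf)` for every `d`: for every `d`
and every `d`-delay operator `lam` there is an input `α` such that the play
`(α, lam α)` is not in `Lhalf`. -/
theorem Lhalf_playerI_wins_every_constant_delay :
    ∀ d : ℕ, ∀ lam : (ℕ → Bool) → (ℕ → Bool), IsConstDelayOp d lam →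
      ∃ α : ℕ → Bool, (fun i => (α i, lam α i)) ∉ Lhalf := by
  intro d lam hlam
  set M := d + 1
  set αA := alphaOf (fun _ => M) (fun _ => 1)
  set αB := alphaOf (fun _ => M + 1) (fun _ => 1)
  have hagree : lam αA M = lam αB M := hlam αA αB M fun j hj => by
    change alphaOf _ _ j = alphaOf _ _ j
    rw [alphaOf_eq_decide _ _ le_rfl (by omega), alphaOf_eq_decide _ _ le_rfl (by omega)]
    simp only [decide_eq_decide]
    omega
  cases hb : lam αA M
  · refine ⟨αB, fun h => ?_⟩
    have hB := snd_eq_decide_of_mem_Lhalf h (fun _ => ⟨by omega, le_rfl⟩) rfl (j := M) (by omega)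
    simp [← hagree, hb] at hB
  · refine ⟨αA, fun h => ?_⟩
    have hA := snd_eq_decide_of_mem_Lhalf h (fun _ => ⟨by omega, le_rfl⟩) rfl (j := M) (by omega)
    simp [hb] at hA
end
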